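/- arXiv:2512.11968 — 3 statements merged into one kernel-verified Lean document; each statement's English description precedes it below -/
import Mathlib

section
/- For finite-dimensional complex vector spaces V and W and linear subspaces C, D ⊆ V, the intersection of tensor powers satisfies C^{⊗N} ∩ D^{⊗N} = (C ∩ D)^{⊗N} inside V^{⊗N}, for every N ≥ 1. -/
open scoped TensorProduct

/-!
Choose a projection `p` of `V` onto `C` whose kernel contains a complement of `C ∩ D` in `D`;
then `p` fixes `C` and maps `D` into `C ∩ D`. The operator `p^{⊗N}` therefore fixes every
tensor in `C^{⊗N}`, while it maps `D^{⊗N}` into `(C ∩ D)^{⊗N}`, so a tensor in both lies in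
`(C ∩ D)^{⊗N}`.
-/

section Lattice

variable {α : Type*} [Lattice α] [BoundedOrder α] [IsModularLattice α] [ComplementedLattice α]

theorem exists_isCompl_and_le_inf_sup (a b : α) : ∃ c, IsCompl a c ∧ b ≤ a ⊓ b ⊔ c := by
  obtain ⟨d, hd, hbd⟩ := IsModularLattice.exists_disjoint_and_sup_eq (inf_le_right : a ⊓ b ≤ b)
  have hdb : d ≤ b := hbd ▸ le_sup_right
  have hda : Disjoint d a := by
    rw [disjoint_iff, ← inf_eq_left.2 hdb, inf_assoc, inf_comm b]
    exact hd.symm.eq_bot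
  obtain ⟨c, hdc, hca⟩ := hda.exists_isCompl
  exact ⟨c, hca.symm, hbd.ge.trans (sup_le_sup_left hdc _)⟩

end Lattice

namespace Submodule

variable {K V : Type*} [DivisionRing K] [AddCommGroup V] [Module K V]

theorem exists_linearMap_fixes_and_mapsTo_inf (C D : Submodule K V) :
    ∃ p : V →ₗ[K] V, (∀ x ∈ C, p x = x) ∧ ∀ x ∈ D, p x ∈ C ⊓ D := by
  obtain ⟨E, hCE, hD⟩ := exists_isCompl_and_le_inf_sup C D
  refine ⟨C.projection E hCE, fun x hx => projection_apply_of_mem_left hCE hx, fun x hx => ?_⟩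
  obtain ⟨y, hy, z, hz, rfl⟩ := mem_sup.1 (hD hx)
  rwa [map_add, projection_apply_of_mem_left hCE hy.1, projection_apply_of_mem_right hCE hz,
    add_zero]

end Submodule

namespace PiTensorProduct

variable {ι R : Type*} [CommSemiring R]

theorem range_map_le_range_map_subtype {M N : ι → Type*} [∀ i, AddCommMonoid (M i)]
    [∀ i, Module R (M i)] [∀ i, AddCommMonoid (N i)] [∀ i, Module R (N i)]
    (f : ∀ i, M i →ₗ[R] N i) (E : ∀ i, Submodule R (N i))
    (hf : ∀ i, LinearMap.range (f i) ≤ E i) :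
    LinearMap.range (map f) ≤ LinearMap.range (map fun i => (E i).subtype) := by
  have hfact : f = fun i => (E i).subtype ∘ₗ (f i).codRestrict (E i) fun x => hf i ⟨x, rfl⟩ :=
    rfl
  rw [hfact, map_comp]
  exact LinearMap.range_comp_le_range _ _

theorem range_map_subtype_inf {K : Type*} [Field K] {V : ι → Type*} [∀ i, AddCommGroup (V i)]
    [∀ i, Module K (V i)] (C D : ∀ i, Submodule K (V i)) :
    LinearMap.range (map fun i => (C i).subtype) ⊓ LinearMap.range (map fun i => (D i).subtype)
      = LinearMap.range (map fun i => (C i ⊓ D i).subtype) := by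
  refine le_antisymm ?_ (le_inf ?_ ?_)
  · choose p hpC hpD using fun i => (C i).exists_linearMap_fixes_and_mapsTo_inf (D i)
    rintro _ ⟨⟨x, rfl⟩, y, hxy⟩
    have hfix : map p (map (fun i => (C i).subtype) x) = map (fun i => (C i).subtype) x := by
      rw [← LinearMap.comp_apply, ← map_comp]
      congr 2
      ext i v
      exact hpC i v v.2
    rw [← hfix, ← hxy, ← LinearMap.comp_apply, ← map_comp]
    refine range_map_le_range_map_subtype _ _ (fun i => ?_) ⟨y, rfl⟩
    rintro _ ⟨v, rfl⟩
    exact hpD i v v.2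
  all_goals
    refine range_map_le_range_map_subtype _ _ fun i => ?_
    rw [Submodule.range_subtype]
  exacts [inf_le_left, inf_le_right]

end PiTensorProduct

theorem stmt0_general (V : Type*) [AddCommGroup V] [Module ℂ V]
    (C D : Submodule ℂ V) (N : ℕ) :
    (LinearMap.range (PiTensorProduct.map (fun _ : Fin N => C.subtype)) ⊓
      LinearMap.range (PiTensorProduct.map (fun _ : Fin N => D.subtype)))
    = LinearMap.range (PiTensorProduct.map (fun _ : Fin N => (C ⊓ D).subtype)) :=
  PiTensorProduct.range_map_subtype_inf (fun _ => C) (fun _ => D)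

/-- For finite-dimensional complex vector spaces and subspaces `C, D ⊆ V`,
`C^{⊗N} ∩ D^{⊗N} = (C ∩ D)^{⊗N}` inside `V^{⊗N}`, for every `N ≥ 1`,
where `E^{⊗N}` denotes the image in `V^{⊗N}` of the `N`-fold tensor power of
the inclusion `E ↪ V`. -/
theorem stmt0 (V : Type*) [AddCommGroup V] [Module ℂ V] [FiniteDimensional ℂ V]
    (C D : Submodule ℂ V) (N : ℕ) (hN : 1 ≤ N) :
    (LinearMap.range (PiTensorProduct.map (fun _ : Fin N => C.subtype)) ⊓
      LinearMap.range (PiTensorProduct.map (fun _ : Fin N => D.subtype)))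
    = LinearMap.range (PiTensorProduct.map (fun _ : Fin N => (C ⊓ D).subtype)) :=
  stmt0_general V C D N
end

section
/- There do not exist finitely many complex numbers μ_1, …, μ_r (r ≥ 0) such that μ_1^N + μ_2^N + ⋯ + μ_r^N = -1 for all positive integers N. -/
/-! The sequences `n ↦ z ^ n` for distinct `z` are the characters of the monoid `ℕ`, hence
linearly independent (Artin). Grouping equal terms, `∑ᵢ zᵢ ^ (n + 1) = 0` for all `n` makes the
coefficient `#{i | zᵢ = w} • w` of each `w` vanish, so every `zᵢ` is `0`. A family `μ` with all
positive power sums equal to `-1`, extended by the value `1`, would be such a family. -/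

open Finset

theorem linearIndependent_fun_pow (K : Type*) [CommRing K] [IsDomain K] :
    LinearIndependent K (fun (z : K) (n : ℕ) => z ^ n) :=
  (linearIndependent_monoidHom (Multiplicative ℕ) K).comp (powersHom K) (powersHom K).injective

theorem sum_filter_eq_zero_of_forall_sum_mul_pow_eq_zero {K ι : Type*} [Field K] [DecidableEq K]
    {s : Finset ι} {a z : ι → K} (h : ∀ n : ℕ, ∑ i ∈ s, a i * z i ^ n = 0) (w : K) :
    ∑ i ∈ s with z i = w, a i = 0 := by
  let l : K →₀ K := ∑ i ∈ s, Finsupp.single (z i) (a i)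
  have hl : Finsupp.linearCombination K (fun (z : K) (n : ℕ) => z ^ n) l = 0 := by
    ext n
    simp [l, map_sum, Finsupp.linearCombination_single, h n]
  have hl0 : l = 0 := linearIndependent_iff.mp (linearIndependent_fun_pow K) l hl
  calc ∑ i ∈ s with z i = w, a i = l w := by
        simp [l, Finsupp.finsetSum_apply, Finsupp.single_apply, sum_filter]
    _ = 0 := by rw [hl0, Finsupp.coe_zero, Pi.zero_apply]

theorem eq_zero_of_forall_sum_pow_succ_eq_zero {K ι : Type*} [Field K] [CharZero K]
    {s : Finset ι} {z : ι → K} (h : ∀ n : ℕ, ∑ i ∈ s, z i ^ (n + 1) = 0) :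
    ∀ i ∈ s, z i = 0 := by
  classical
  intro i hi
  have hsum := sum_filter_eq_zero_of_forall_sum_mul_pow_eq_zero (a := z) (z := z)
    (fun n => by simpa only [← pow_succ'] using h n) (z i)
  have hcard : #{j ∈ s | z j = z i} ≠ 0 :=
    card_ne_zero_of_mem (mem_filter.mpr ⟨hi, rfl⟩)
  rw [sum_congr rfl fun j hj => (mem_filter.mp hj).2, sum_const] at hsum
  exact (smul_eq_zero.mp hsum).resolve_left hcard

/-- There do not exist finitely many complex numbers `μ_1, …, μ_r` such that
`μ_1^N + ⋯ + μ_r^N = -1` for all positive integers `N`. -/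
theorem stmt1 :
    ¬ ∃ (r : ℕ) (μ : Fin r → ℂ), ∀ N : ℕ, 0 < N → (∑ k, μ k ^ N) = -1 := by
  rintro ⟨r, μ, h⟩
  have hsum : ∀ n : ℕ, ∑ i : Option (Fin r), Option.elim i 1 μ ^ (n + 1) = 0 := fun n => by
    rw [Fintype.sum_option, Option.elim_none, one_pow]
    simp only [Option.elim_some, h (n + 1) n.succ_pos, add_neg_cancel]
  exact one_ne_zero (eq_zero_of_forall_sum_pow_succ_eq_zero hsum none (mem_univ _))
end

section
/- Let V be a finite-dimensional complex vector space, v ∈ V nonzero, α ∈ ℂ nonzero, M ∈ ℕ, and w_0, …, w_M ∈ V. If v·α^{-N} = Σ_{m=0}^{M} binom(N, m)·w_m for all natural numbers N ≥ M, then α = 1, w_0 = v, and w_m = 0 for all 1 ≤ m ≤ M. -/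
open Finset

private lemma diff_sum {V : Type*} [AddCommGroup V] [Module ℂ V] (K c N : ℕ) (u : ℕ → V) :
    (∑ m ∈ range (K + 2), ((N + 1 + c).choose m : ℂ) • u m) -
      ∑ m ∈ range (K + 2), ((N + c).choose m : ℂ) • u m =
      ∑ m ∈ range (K + 1), ((N + c).choose m : ℂ) • u (m + 1) := by
  rw [← Finset.sum_sub_distrib, Finset.sum_range_succ']
  have h0 : ((N + 1 + c).choose 0 : ℂ) • u 0 - ((N + c).choose 0 : ℂ) • u 0 = 0 := by simp
  rw [h0, add_zero]
  apply Finset.sum_congr rfl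
  intro i _
  have hch : (N + 1 + c).choose (i + 1) = (N + c).choose i + (N + c).choose (i + 1) := by
    have hnc : N + 1 + c = (N + c) + 1 := by ring
    rw [hnc, Nat.choose_succ_succ]
  rw [hch]
  push_cast
  rw [add_smul, add_sub_cancel_right]

private lemma lemB {V : Type*} [AddCommGroup V] [Module ℂ V] :
    ∀ (K c : ℕ) (γ : ℂ) (v : V) (u : ℕ → V),
    (∀ N : ℕ, γ ^ (N + c) • v = ∑ m ∈ range (K + 1), ((N + c).choose m : ℂ) • u m) →
    ((γ - 1) ^ (K + 1) * γ ^ c) • v = 0 := by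
  intro K
  induction K with
  | zero =>
    intro c γ v u h
    have h0 := h 0
    have h1 := h 1
    simp only [Finset.sum_range_one, Nat.choose_zero_right, Nat.cast_one, one_smul,
      zero_add] at h0 h1
    have : γ ^ (1 + c) • v - γ ^ c • v = 0 := by rw [h0, h1, sub_self]
    have hpow : γ ^ (1 + c) = γ * γ ^ c := by rw [pow_add, pow_one]
    rw [hpow] at this
    calc ((γ - 1) ^ (0 + 1) * γ ^ c) • v = (γ * γ ^ c) • v - γ ^ c • v := by
          rw [← sub_smul]; ring_nf
      _ = 0 := this
  | succ K ih =>
    intro c γ v u h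
    have key : ∀ N : ℕ, γ ^ (N + c) • ((γ - 1) • v) =
        ∑ m ∈ range (K + 1), ((N + c).choose m : ℂ) • u (m + 1) := by
      intro N
      have hd := diff_sum K c N u
      rw [← h N, ← h (N + 1)] at hd
      rw [← hd]
      have hpow : γ ^ (N + 1 + c) = γ * γ ^ (N + c) := by rw [pow_add, pow_add, pow_one]; ring
      rw [hpow, smul_smul, ← sub_smul, mul_comm]
      ring_nf
    have hih := ih c γ ((γ - 1) • v) (fun m => u (m + 1)) key
    rw [smul_smul] at hih
    calc ((γ - 1) ^ (K + 1 + 1) * γ ^ c) • v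
        = ((γ - 1) ^ (K + 1) * γ ^ c * (γ - 1)) • v := by ring_nf
      _ = 0 := hih

private lemma lemA {V : Type*} [AddCommGroup V] [Module ℂ V] :
    ∀ (K c : ℕ) (u : ℕ → V),
    (∀ N : ℕ, ∑ m ∈ range (K + 1), ((N + c).choose m : ℂ) • u m = 0) →
    ∀ m ≤ K, u m = 0 := by
  intro K
  induction K with
  | zero =>
    intro c u h m hm
    interval_cases m
    have h0 := h 0
    simpa using h0
  | succ K ih =>
    intro c u h m hm
    have key : ∀ N : ℕ, ∑ m ∈ range (K + 1), ((N + c).choose m : ℂ) • u (m + 1) = 0 := by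
      intro N
      rw [← diff_sum K c N u, h N, h (N + 1), sub_zero]
    have hs := ih c (fun m => u (m + 1)) key
    match m with
    | 0 =>
      have h0 := h 0
      rw [Finset.sum_range_succ'] at h0
      have hz : ∀ i ∈ range (K + 1), ((0 + c).choose (i + 1) : ℂ) • u (i + 1) = 0 := by
        intro i hi
        have h5 := hs i (Nat.lt_succ_iff.mp (Finset.mem_range.mp hi))
        rw [h5, smul_zero]
      rw [Finset.sum_eq_zero hz, zero_add] at h0
      simpa using h0
    | m + 1 => exact hs m (by omega)

/-- If `v ≠ 0`, `α ≠ 0` and `v·α^{-N} = Σ_{m=0}^{M} binom(N,m)·w_m` for all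
`N ≥ M`, then `α = 1`, `w_0 = v`, and `w_m = 0` for `1 ≤ m ≤ M`. -/
theorem stmt3 (V : Type*) [AddCommGroup V] [Module ℂ V] [FiniteDimensional ℂ V]
    (v : V) (hv : v ≠ 0) (α : ℂ) (hα : α ≠ 0) (M : ℕ) (w : ℕ → V)
    (h : ∀ N : ℕ, M ≤ N →
      (α ^ N)⁻¹ • v = ∑ m ∈ Finset.range (M + 1), (N.choose m : ℂ) • w m) :
    α = 1 ∧ w 0 = v ∧ ∀ m, 1 ≤ m → m ≤ M → w m = 0 := by
  set β := α⁻¹ with hβdef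
  have hβ : β ≠ 0 := inv_ne_zero hα
  have h' : ∀ N : ℕ, β ^ (N + M) • v =
      ∑ m ∈ range (M + 1), ((N + M).choose m : ℂ) • w m := by
    intro N
    have hh := h (N + M) (by omega)
    rw [← inv_pow] at hh
    exact hh
  have hb := lemB M M β v w h'
  have hscal : (β - 1) ^ (M + 1) * β ^ M = 0 := by
    by_contra hc
    exact hv ((smul_eq_zero.mp hb).resolve_left hc)
  have hβ1 : β = 1 := by
    rcases mul_eq_zero.mp hscal with h1 | h2
    · exact sub_eq_zero.mp (pow_eq_zero_iff (by omega : M + 1 ≠ 0) |>.mp h1)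
    · exact absurd h2 (pow_ne_zero M hβ)
  have hα1 : α = 1 := by
    rw [hβdef] at hβ1
    exact inv_eq_one.mp hβ1
  have hconst : ∀ N : ℕ, v = ∑ m ∈ range (M + 1), ((N + M).choose m : ℂ) • w m := by
    intro N
    have := h' N
    rw [hβdef, hα1] at this
    simpa using this
  set u : ℕ → V := fun m => if m = 0 then w 0 - v else w m with hudef
  have h2 : ∀ N : ℕ, ∑ m ∈ range (M + 1), ((N + M).choose m : ℂ) • u m = 0 := by
    intro N
    rw [Finset.sum_range_succ']
    have hc := hconst N
    rw [Finset.sum_range_succ'] at hc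
    simp only [hudef, Nat.choose_zero_right, Nat.cast_one, one_smul, if_pos rfl]
    have htail : ∀ i, ((N + M).choose (i + 1) : ℂ) • (if i + 1 = 0 then w 0 - v else w (i + 1))
        = ((N + M).choose (i + 1) : ℂ) • w (i + 1) := by
      intro i; simp
    rw [Finset.sum_congr rfl (fun i _ => htail i)]
    have : v = (∑ i ∈ range M, ((N + M).choose (i + 1) : ℂ) • w (i + 1)) + w 0 := by
      simpa using hc
    rw [this]
    abel
  have hall := lemA M M u h2
  refine ⟨hα1, ?_, ?_⟩
  · have h0 := hall 0 (by omega)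
    simp only [hudef, if_pos rfl] at h0
    exact sub_eq_zero.mp h0
  · intro m h1 hm
    have hm0 := hall m hm
    simp only [hudef, if_neg (by omega : m ≠ 0)] at hm0
    exact hm0
end
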